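/- arXiv:2511.17128 — 2 statements merged into one kernel-verified Lean document; each statement's English description precedes it below -/
import Mathlib

section
/- Let I be a finite set with partition I = I_P ∪ I_F where p_i ∈ [0,1) for i ∈ I_P and p_i = 1 for i ∈ I_F. Let K ≥ 2, C ⊆ I_P, k_i ∈ {1,…,K-1} for i ∈ I_P\C, and p_C = ∏_{i∈C}(1-p_i). Then for all (η, y, z) ∈ ℝ × ℤ_{≥0}^I × {0,1}^I with η ≤ 1 - ∏_{i∈I}(1-p_i)^{y_i} and z_i ≤ y_i ≤ K z_i for all i ∈ I, the lifted subadditive inequality η ≤ 1 - p_C + p_C · (∑_{i∈I_P\C} h_{i,k_i}(y_i,z_i) + ∑_{i∈C} p_i (y_i - z_i) + ∑_{i∈I_F} z_i) holds, where h_{i,k}(y,z) = p_i(1-p_i)^k y + (1-(1-p_i)^k(k p_i+1)) z and 0^0 = 1. -/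
open Finset

private lemma bern {a : ℝ} (ha : 0 ≤ a) (n : ℕ) : 1 - (1 - a) * n ≤ a ^ n := by
  have h := one_add_mul_sub_le_pow (a := a) (by linarith) n
  linarith [h, (by ring : (1:ℝ) + n * (a - 1) = 1 - (1 - a) * n)]

private lemma aux2 {a : ℝ} (ha : 0 ≤ a) (ha1 : a ≤ 1) (m : ℕ) :
    a ^ m * (1 + (1 - a) * m) ≤ 1 := by
  induction m with
  | zero => simp
  | succ n ih =>
    have hpow : (0:ℝ) ≤ a ^ n := pow_nonneg ha n
    have hn : (0:ℝ) ≤ (n:ℝ) + 1 := by positivity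
    have key : a ^ n * (1 + (1 - a) * n) - a ^ (n + 1) * (1 + (1 - a) * ((n:ℝ) + 1))
        = a ^ n * (1 - a) ^ 2 * ((n:ℝ) + 1) := by ring
    have h2 : (0:ℝ) ≤ a ^ n * (1 - a) ^ 2 * ((n:ℝ) + 1) :=
      mul_nonneg (mul_nonneg hpow (sq_nonneg _)) hn
    push_cast
    linarith

private lemma keyC {a : ℝ} (ha : 0 ≤ a) (ha1 : a ≤ 1) (y k : ℕ) :
    a ^ k * (1 + (1 - a) * ((k : ℝ) - (y : ℝ))) ≤ a ^ y := by
  rcases le_total k y with h | h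
  · obtain ⟨m, rfl⟩ := Nat.exists_eq_add_of_le h
    have hb := bern ha m
    have h2 : a ^ k * (1 - (1 - a) * m) ≤ a ^ k * a ^ m :=
      mul_le_mul_of_nonneg_left hb (pow_nonneg ha k)
    rw [pow_add]
    push_cast
    nlinarith [h2]
  · obtain ⟨m, rfl⟩ := Nat.exists_eq_add_of_le h
    have hb := aux2 ha ha1 m
    have h2 : a ^ y * (a ^ m * (1 + (1 - a) * m)) ≤ a ^ y * 1 :=
      mul_le_mul_of_nonneg_left hb (pow_nonneg ha y)
    rw [pow_add]
    push_cast
    nlinarith [h2]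

private lemma weier {I : Type*} (s : Finset I) (f : I → ℝ)
    (h0 : ∀ i ∈ s, 0 ≤ f i) (h1 : ∀ i ∈ s, f i ≤ 1) :
    1 - ∑ i ∈ s, f i ≤ ∏ i ∈ s, (1 - f i) := by
  induction s using Finset.cons_induction with
  | empty => simp
  | cons a t hat ih =>
    rw [Finset.sum_cons, Finset.prod_cons]
    have h0' : ∀ i ∈ t, 0 ≤ f i := fun i hi => h0 i (Finset.mem_cons_of_mem hi)
    have h1' : ∀ i ∈ t, f i ≤ 1 := fun i hi => h1 i (Finset.mem_cons_of_mem hi)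
    have ih' := ih h0' h1'
    have hfa0 := h0 a (Finset.mem_cons_self a t)
    have hfa1 := h1 a (Finset.mem_cons_self a t)
    have hsum : 0 ≤ ∑ i ∈ t, f i := Finset.sum_nonneg h0'
    nlinarith [mul_le_mul_of_nonneg_left ih' (by linarith : (0:ℝ) ≤ 1 - f a),
      mul_nonneg hfa0 hsum]

theorem stmt6 {I : Type*} [Fintype I] [DecidableEq I] (p : I → ℝ)
    (hp : ∀ i, 0 ≤ p i ∧ p i ≤ 1) (K : ℕ) (hK : 2 ≤ K)
    (C : Finset I) (hC : C ⊆ univ.filter (fun i => p i < 1))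
    (k : I → ℕ) (hk : ∀ i ∈ (univ.filter (fun i => p i < 1)) \ C, 1 ≤ k i ∧ k i ≤ K - 1)
    (η : ℝ) (y z : I → ℕ) (hz : ∀ i, z i ≤ 1)
    (hzy : ∀ i, z i ≤ y i) (hyK : ∀ i, y i ≤ K * z i)
    (hη : η ≤ 1 - ∏ i, (1 - p i) ^ (y i)) :
    η ≤ 1 - (∏ i ∈ C, (1 - p i)) + (∏ i ∈ C, (1 - p i)) *
      ((∑ i ∈ (univ.filter (fun i => p i < 1)) \ C,
          (p i * (1 - p i) ^ (k i) * (y i : ℝ) +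
            (1 - (1 - p i) ^ (k i) * ((k i : ℝ) * p i + 1)) * (z i : ℝ))) +
        (∑ i ∈ C, p i * ((y i : ℝ) - (z i : ℝ))) +
        ∑ i ∈ univ.filter (fun i => p i = 1), (z i : ℝ)) := by
  classical
  set P : Finset I := univ.filter (fun i => p i < 1) with hPdef
  set F : Finset I := univ.filter (fun i => p i = 1) with hFdef
  -- basic facts
  have hy0 : ∀ i, z i = 0 → y i = 0 := by
    intro i hzi
    have := hyK i
    rw [hzi, Nat.mul_zero] at this
    omega
  have hz01 : ∀ i, z i = 0 ∨ z i = 1 := fun i => by have := hz i; omega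
  have haP : ∀ i ∈ P, 0 ≤ 1 - p i ∧ 1 - p i ≤ 1 := by
    intro i hi
    rw [hPdef, mem_filter] at hi
    exact ⟨by linarith [hi.2], by linarith [(hp i).1]⟩
  have ha_all : ∀ i, 0 ≤ 1 - p i ∧ 1 - p i ≤ 1 := fun i =>
    ⟨by linarith [(hp i).2], by linarith [(hp i).1]⟩
  have hpC0 : 0 ≤ ∏ i ∈ C, (1 - p i) :=
    prod_nonneg fun i hi => (ha_all i).1
  have hprod0 : 0 ≤ ∏ i, (1 - p i) ^ (y i) :=
    prod_nonneg fun i _ => pow_nonneg (ha_all i).1 _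
  have hη1 : η ≤ 1 := le_trans hη (by linarith)
  -- the per-index function
  set t : I → ℝ := fun i =>
    if i ∈ C then p i * ((y i : ℝ) - (z i : ℝ))
    else p i * (1 - p i) ^ (k i) * (y i : ℝ) +
      (1 - (1 - p i) ^ (k i) * ((k i : ℝ) * p i + 1)) * (z i : ℝ) with htdef
  -- key per-index inequalities
  have key_notC : ∀ i ∈ P \ C, 1 - (1 - p i) ^ (y i) ≤ t i := by
    intro i hi
    have hiP : i ∈ P := (mem_sdiff.mp hi).1
    have hiC : i ∉ C := (mem_sdiff.mp hi).2
    obtain ⟨ha0, ha1⟩ := haP i hiP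
    rw [htdef]
    simp only [if_neg hiC]
    rcases hz01 i with hzi | hzi
    · have hyi := hy0 i hzi
      rw [hzi, hyi]
      simp
    · have hkc := keyC ha0 ha1 (y i) (k i)
      rw [hzi]
      push_cast
      nlinarith [hkc]
  have key_C : ∀ i ∈ C, (1 - p i) * (1 - t i) ≤ (1 - p i) ^ (y i) := by
    intro i hiC
    obtain ⟨ha0, ha1⟩ := haP i (hC hiC)
    rw [htdef]
    simp only [if_pos hiC]
    rcases hz01 i with hzi | hzi
    · have hyi := hy0 i hzi
      rw [hzi, hyi]
      simp
      linarith [(hp i).1]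
    · have h1y : 1 ≤ y i := by have := hzy i; omega
      obtain ⟨m, hm⟩ := Nat.exists_eq_add_of_le h1y
      have hb := bern ha0 m
      have h2 : (1 - p i) * (1 - (1 - (1 - p i)) * m) ≤ (1 - p i) * (1 - p i) ^ m :=
        mul_le_mul_of_nonneg_left hb ha0
      rw [hm, hzi, pow_add, pow_one]
      push_cast
      nlinarith [h2]
  -- nonnegativity of t on P
  have t_nonneg : ∀ i ∈ P, 0 ≤ t i := by
    intro i hiP
    by_cases hiC : i ∈ C
    · rw [htdef]
      simp only [if_pos hiC]
      have := hzy i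
      have : (z i : ℝ) ≤ (y i : ℝ) := by exact_mod_cast this
      have hp0 := (hp i).1
      nlinarith
    · have h1 := key_notC i (mem_sdiff.mpr ⟨hiP, hiC⟩)
      have h2 : (1 - p i) ^ (y i) ≤ 1 :=
        pow_le_one₀ (haP i hiP).1 (haP i hiP).2
      linarith
  -- abbreviations for the three sums
  set S1 : ℝ := ∑ i ∈ P \ C,
      (p i * (1 - p i) ^ (k i) * (y i : ℝ) +
        (1 - (1 - p i) ^ (k i) * ((k i : ℝ) * p i + 1)) * (z i : ℝ)) with hS1def
  set S2 : ℝ := ∑ i ∈ C, p i * ((y i : ℝ) - (z i : ℝ)) with hS2def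
  set S3 : ℝ := ∑ i ∈ F, (z i : ℝ) with hS3def
  -- sums of t over the pieces
  have hS1t : S1 = ∑ i ∈ P \ C, t i := by
    rw [hS1def]
    refine sum_congr rfl fun i hi => ?_
    rw [htdef]
    simp only [if_neg (mem_sdiff.mp hi).2]
  have hS2t : S2 = ∑ i ∈ C, t i := by
    rw [hS2def]
    refine sum_congr rfl fun i hi => ?_
    rw [htdef]
    simp only [if_pos hi]
  have hS1nn : 0 ≤ S1 := by
    rw [hS1t]; exact sum_nonneg fun i hi => t_nonneg i (mem_sdiff.mp hi).1
  have hS2nn : 0 ≤ S2 := by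
    rw [hS2t]; exact sum_nonneg fun i hi => t_nonneg i (hC hi)
  have hS3nn : 0 ≤ S3 := by
    rw [hS3def]; exact sum_nonneg fun i _ => by positivity
  rcases le_or_gt 1 (S1 + S2 + S3) with hS | hS
  · -- trivial case: RHS ≥ 1
    nlinarith [hpC0, hη1]
  · -- main case
    -- all z vanish on F
    have hzF : ∀ i ∈ F, z i = 0 := by
      intro i hi
      by_contra hne
      have hzi : z i = 1 := by have := hz i; omega
      have h1 : (1 : ℝ) ≤ S3 := by
        rw [hS3def]
        calc (1:ℝ) = (z i : ℝ) := by rw [hzi]; norm_num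
        _ ≤ ∑ j ∈ F, (z j : ℝ) :=
            single_le_sum (f := fun j => (z j : ℝ)) (fun j _ => by positivity) hi
      linarith
    have hS3z : S3 = 0 := by
      rw [hS3def]
      refine sum_eq_zero fun i hi => ?_
      rw [hzF i hi]; norm_num
    -- product over univ equals product over P
    have hPF : ∏ i, (1 - p i) ^ (y i) = ∏ i ∈ P, (1 - p i) ^ (y i) := by
      rw [← prod_filter_mul_prod_filter_not univ (fun i => p i < 1)
        (fun i => (1 - p i) ^ (y i))]
      have h1 : ∏ i ∈ univ.filter (fun i => ¬ p i < 1), (1 - p i) ^ (y i) = 1 := by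
        refine prod_eq_one fun i hi => ?_
        rw [mem_filter] at hi
        have hpi : p i = 1 := le_antisymm (hp i).2 (not_lt.mp hi.2)
        have hiF : i ∈ F := by rw [hFdef, mem_filter]; exact ⟨mem_univ i, hpi⟩
        rw [hy0 i (hzF i hiF), pow_zero]
      rw [h1, mul_one]
    -- each t i is < 1 on P
    have ht1 : ∀ i ∈ P, t i ≤ 1 := by
      intro i hiP
      by_cases hiC : i ∈ C
      · have : t i ≤ S2 := by
          rw [hS2t]
          exact single_le_sum (fun j hj => t_nonneg j (hC hj)) hiC
        linarith
      · have : t i ≤ S1 := by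
          rw [hS1t]
          exact single_le_sum (fun j hj => t_nonneg j (mem_sdiff.mp hj).1)
            (mem_sdiff.mpr ⟨hiP, hiC⟩)
        linarith
    -- Weierstrass product inequality
    have hW : 1 - ∑ i ∈ P, t i ≤ ∏ i ∈ P, (1 - t i) :=
      weier P t t_nonneg ht1
    have hsum_split : ∑ i ∈ P, t i = S1 + S2 := by
      rw [hS1t, hS2t, sum_sdiff hC]
    have hprod_split : ∏ i ∈ P, (1 - t i) =
        (∏ i ∈ P \ C, (1 - t i)) * ∏ i ∈ C, (1 - t i) := (prod_sdiff hC).symm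
    -- bound the two partial products
    have hb1 : ∏ i ∈ P \ C, (1 - t i) ≤ ∏ i ∈ P \ C, (1 - p i) ^ (y i) := by
      refine prod_le_prod (fun i hi => ?_) (fun i hi => ?_)
      · linarith [ht1 i (mem_sdiff.mp hi).1]
      · linarith [key_notC i hi]
    have hb2 : ∏ i ∈ C, ((1 - p i) * (1 - t i)) ≤ ∏ i ∈ C, (1 - p i) ^ (y i) := by
      refine prod_le_prod (fun i hi => ?_) (fun i hi => ?_)
      · have h0 := (haP i (hC hi)).1
        have h1 := ht1 i (hC hi)
        nlinarith
      · exact key_C i hi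
    have hbm : (∏ i ∈ C, (1 - p i)) * ∏ i ∈ C, (1 - t i) =
        ∏ i ∈ C, ((1 - p i) * (1 - t i)) := (prod_mul_distrib).symm
    -- assemble
    have hfin : (∏ i ∈ C, (1 - p i)) * (1 - (S1 + S2 + S3)) ≤ ∏ i, (1 - p i) ^ (y i) := by
      rw [hPF, ← prod_sdiff hC (f := fun i => (1 - p i) ^ (y i)), hS3z]
      have step1 : (∏ i ∈ C, (1 - p i)) * (1 - (S1 + S2 + 0)) ≤
          (∏ i ∈ C, (1 - p i)) * ∏ i ∈ P, (1 - t i) := by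
        apply mul_le_mul_of_nonneg_left _ hpC0
        rw [← hsum_split] at *
        linarith [hW]
      refine step1.trans ?_
      rw [hprod_split]
      have hprodnn : 0 ≤ ∏ i ∈ P \ C, (1 - t i) := by
        refine prod_nonneg fun i hi => ?_
        linarith [ht1 i (mem_sdiff.mp hi).1]
      calc (∏ i ∈ C, (1 - p i)) * ((∏ i ∈ P \ C, (1 - t i)) * ∏ i ∈ C, (1 - t i))
          = (∏ i ∈ P \ C, (1 - t i)) * ((∏ i ∈ C, (1 - p i)) * ∏ i ∈ C, (1 - t i)) := by
            ring
        _ ≤ (∏ i ∈ P \ C, (1 - t i)) * ∏ i ∈ C, (1 - p i) ^ (y i) := by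
            rw [hbm]
            exact mul_le_mul_of_nonneg_left hb2 hprodnn
        _ ≤ (∏ i ∈ P \ C, (1 - p i) ^ (y i)) * ∏ i ∈ C, (1 - p i) ^ (y i) := by
            apply mul_le_mul_of_nonneg_right hb1
            exact prod_nonneg fun i _ => pow_nonneg (ha_all i).1 _
    linarith [hη, hfin]
end

section
/- Suppose (η*, y*, z*) ∈ ℝ × ℝ_{≥0}^I × [0,1]^I satisfies η* ≤ 1 and z*_i ≤ y*_i ≤ K z*_i for all i, and suppose the lifted subadditive inequality defined by a set C ⊆ I_P and the minimizing indices {k*_i} is violated by (η*, y*, z*) by margin ε > 0, i.e., η* - ν(C) = ε where ν(C) = 1 - p_C·ω_C with p_C = ∏_{i∈C}(1-p_i) and ω_C = 1 - (∑_{i∈I_P\C} h_{i,k*_i}(y*_i,z*_i) + ∑_{i∈C} p_i(y*_i - z*_i) + ∑_{i∈I_F} z*_i). If y*_{i₀} = z*_{i₀} = 1 for some i₀ ∈ I_P \ C, then ν(C ∪ {i₀}) ≤ ν(C), i.e., the inequality defined by C ∪ {i₀} is violated by at least ε. -/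
open Finset

/-- The secant-line upper bound `h_k(y,z)` of `y ↦ 1-(1-p)^y`. -/
noncomputable def hsec (p : ℝ) (ys zs : ℝ) (k : ℕ) : ℝ :=
  p * (1 - p) ^ k * ys + (1 - (1 - p) ^ k * ((k : ℝ) * p + 1)) * zs

/-- The minimizing secant index `k* = ⌊y*/z*⌋` if `z* > 0`, else `1`. -/
noncomputable def kstar (ys zs : ℝ) : ℕ := if 0 < zs then ⌊ys / zs⌋₊ else 1

/-- `ν(C) = 1 - p_C · ω_C`, the right-hand side of the lifted subadditive
inequality at `(y*, z*)` with the minimizing indices `k*_i`. -/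
noncomputable def nuRHS {I : Type*} [Fintype I] [DecidableEq I]
    (p : I → ℝ) (ys zs : I → ℝ) (C : Finset I) : ℝ :=
  1 - (∏ i ∈ C, (1 - p i)) *
    (1 - ((∑ i ∈ (univ.filter (fun i => p i < 1)) \ C,
        hsec (p i) (ys i) (zs i) (kstar (ys i) (zs i))) +
      (∑ i ∈ C, p i * (ys i - zs i)) +
      ∑ i ∈ univ.filter (fun i => p i = 1), zs i))

lemma hsec_nonneg (p ys zs : ℝ) (hp0 : 0 ≤ p) (hp1 : p ≤ 1)
    (hz0 : 0 ≤ zs) (hzy : zs ≤ ys) :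
    0 ≤ hsec p ys zs (kstar ys zs) := by
  unfold hsec kstar
  by_cases hz : 0 < zs
  · rw [if_pos hz]
    set k := ⌊ys / zs⌋₊ with hk
    have hky : (k : ℝ) * zs ≤ ys := by
      have h1 : (k : ℝ) ≤ ys / zs := Nat.floor_le (div_nonneg (hz0.trans hzy) hz.le)
      calc (k : ℝ) * zs ≤ (ys / zs) * zs := by nlinarith
        _ = ys := by field_simp
    have hq0 : 0 ≤ (1 - p) ^ k := pow_nonneg (by linarith) _
    have hq1 : (1 - p) ^ k ≤ 1 := pow_le_one₀ (by linarith) (by linarith)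
    nlinarith [mul_nonneg (mul_nonneg hp0 hq0) (sub_nonneg.mpr hky),
      mul_nonneg hz0 (sub_nonneg.mpr hq1)]
  · rw [if_neg hz]
    have hz' : zs = 0 := le_antisymm (not_lt.mp hz) hz0
    have hy0 : 0 ≤ ys := hz' ▸ hzy
    rw [hz']
    nlinarith [mul_nonneg (mul_nonneg hp0 (by linarith : (0:ℝ) ≤ 1 - p)) hy0]

theorem stmt12 {I : Type*} [Fintype I] [DecidableEq I] (p : I → ℝ)
    (hp : ∀ i, 0 ≤ p i ∧ p i ≤ 1) (K : ℕ) (hK : 2 ≤ K)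
    (ηs : ℝ) (hηs : ηs ≤ 1) (ys zs : I → ℝ)
    (hz : ∀ i, 0 ≤ zs i ∧ zs i ≤ 1)
    (hzy : ∀ i, zs i ≤ ys i) (hyK : ∀ i, ys i ≤ (K : ℝ) * zs i)
    (C : Finset I) (hC : C ⊆ univ.filter (fun i => p i < 1))
    (ε : ℝ) (hε : 0 < ε) (hviol : ηs - nuRHS p ys zs C = ε)
    (i₀ : I) (hi₀P : p i₀ < 1) (hi₀C : i₀ ∉ C)
    (hy₀ : ys i₀ = 1) (hz₀ : zs i₀ = 1) :
    ε ≤ ηs - nuRHS p ys zs (insert i₀ C) := by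
  have key : nuRHS p ys zs (insert i₀ C) ≤ nuRHS p ys zs C := by
    set S := univ.filter (fun i => p i < 1) with hS
    have hi₀S : i₀ ∈ S \ C := by
      simp [hS, hi₀P, hi₀C]
    -- hsec at i₀ equals p i₀
    have hsec₀ : hsec (p i₀) (ys i₀) (zs i₀) (kstar (ys i₀) (zs i₀)) = p i₀ := by
      rw [hy₀, hz₀]
      have : kstar 1 1 = 1 := by
        unfold kstar
        norm_num
      rw [this]
      unfold hsec
      push_cast
      ring
    -- decompose the sum over S \ C
    have hsplit : S \ insert i₀ C = (S \ C).erase i₀ := by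
      ext x
      simp [Finset.mem_sdiff, Finset.mem_erase, Finset.mem_insert]
      tauto
    have hsum : (∑ i ∈ S \ C, hsec (p i) (ys i) (zs i) (kstar (ys i) (zs i)))
        = p i₀ + ∑ i ∈ S \ insert i₀ C, hsec (p i) (ys i) (zs i) (kstar (ys i) (zs i)) := by
      rw [hsplit, ← Finset.add_sum_erase _ _ hi₀S, hsec₀]
    have hsumC : (∑ i ∈ insert i₀ C, p i * (ys i - zs i))
        = ∑ i ∈ C, p i * (ys i - zs i) := by
      rw [Finset.sum_insert hi₀C, hy₀, hz₀]
      ring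
    have hprod : (∏ i ∈ insert i₀ C, (1 - p i)) = (1 - p i₀) * ∏ i ∈ C, (1 - p i) :=
      Finset.prod_insert hi₀C
    set A := ∑ i ∈ S \ insert i₀ C, hsec (p i) (ys i) (zs i) (kstar (ys i) (zs i)) with hA
    set B := ∑ i ∈ C, p i * (ys i - zs i) with hB
    set D := ∑ i ∈ univ.filter (fun i => p i = 1), zs i with hD
    set P := ∏ i ∈ C, (1 - p i) with hP
    have hA0 : 0 ≤ A :=
      Finset.sum_nonneg fun i _ => hsec_nonneg _ _ _ (hp i).1 (hp i).2 (hz i).1 (hzy i)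
    have hB0 : 0 ≤ B :=
      Finset.sum_nonneg fun i _ => mul_nonneg (hp i).1 (sub_nonneg.mpr (hzy i))
    have hD0 : 0 ≤ D := Finset.sum_nonneg fun i _ => (hz i).1
    have hP0 : 0 ≤ P :=
      Finset.prod_nonneg fun i hi => by linarith [(hp i).2]
    have hp₀0 : 0 ≤ p i₀ := (hp i₀).1
    unfold nuRHS
    rw [hprod, hsumC, hsum]
    rw [← hS, ← hA, ← hB, ← hD, ← hP]
    nlinarith [mul_nonneg (mul_nonneg hP0 hp₀0) hA0,
      mul_nonneg (mul_nonneg hP0 hp₀0) hB0,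
      mul_nonneg (mul_nonneg hP0 hp₀0) hD0]
  linarith
end
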